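/- arXiv:math/0408045 — 2 statements merged into one kernel-verified Lean document; each statement's English description precedes it below -/
import Mathlib

section
/- For every positive rational number r = m/(n+1) with m, n positive integers, there exists a finite double groupoid T satisfying the filling condition together with a box A such that the square of the antipode of the weak Hopf algebra kT satisfies S²(A) = r·A. Concretely: take P = {P,Q,R,S_1,…,S_m,T_1,…,T_n}, H the equivalence-relation groupoid of the partition {P,Q,T_1,…,T_n} ∪ {R,S_1,…,S_m}, V that of {P,R} ∪ {Q,S_1,…,S_m,T_1,…,T_n}, and T the double groupoid of commuting squares in P×P with horizontal arrows in H and vertical arrows in V; then θ(P)=θ(R)=1, θ(Q)=θ(T_i)=n+1, θ(S_j)=m; and the box with top (P,Q) and bottom (R,S_1) satisfies S²(A) = (m/(n+1))A. -/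
/-- A (finite) groupoid, presented algebraically: a set `A` of arrows over a base `P`,
with source `s`, target `e`, identities, a (total, junk-valued when undefined)
composition, and inverses. Composition is written left to right: `comp a b` is
defined when `e a = s b`. -/
structure Gpd (P : Type) (A : Type) where
  s : A → P
  e : A → P
  id : P → A
  comp : A → A → A
  inv : A → A
  s_id : ∀ p, s (id p) = p
  e_id : ∀ p, e (id p) = p
  s_comp : ∀ a b, e a = s b → s (comp a b) = s a
  e_comp : ∀ a b, e a = s b → e (comp a b) = e b
  id_comp : ∀ a, comp (id (s a)) a = a
  comp_id : ∀ a, comp a (id (e a)) = a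
  comp_assoc : ∀ a b c, e a = s b → e b = s c →
    comp (comp a b) c = comp a (comp b c)
  s_inv : ∀ a, s (inv a) = e a
  e_inv : ∀ a, e (inv a) = s a
  inv_comp : ∀ a, comp (inv a) a = id (e a)
  comp_inv : ∀ a, comp a (inv a) = id (s a)

/-- A finite double groupoid: boxes `B`, horizontal arrows `H`, vertical arrows `V`,
points `P`; boxes carry a horizontal groupoid structure over `V`
(source = left side, target = right side) and a vertical groupoid structure over `H`
(source = top side, target = bottom side), compatible with the side groupoids,
satisfying the interchange law. -/
structure DoubleGroupoid where
  P : Type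
  H : Type
  V : Type
  B : Type
  [fP : Fintype P]
  [fH : Fintype H]
  [fV : Fintype V]
  [fB : Fintype B]
  [dP : DecidableEq P]
  [dH : DecidableEq H]
  [dV : DecidableEq V]
  [dB : DecidableEq B]
  /-- horizontal arrows: source `s` = left point, target `e` = right point -/
  gH : Gpd P H
  /-- vertical arrows: source `s` = top point, target `e` = bottom point -/
  gV : Gpd P V
  /-- horizontal composition of boxes; base `V`, source = left side, target = right side -/
  gBh : Gpd V B
  /-- vertical composition of boxes; base `H`, source = top side, target = bottom side -/
  gBv : Gpd H B
  corner_tl : ∀ A, gH.s (gBv.s A) = gV.s (gBh.s A)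
  corner_tr : ∀ A, gH.e (gBv.s A) = gV.s (gBh.e A)
  corner_bl : ∀ A, gH.s (gBv.e A) = gV.e (gBh.s A)
  corner_br : ∀ A, gH.e (gBv.e A) = gV.e (gBh.e A)
  t_hcomp : ∀ A B, gBh.e A = gBh.s B →
    gBv.s (gBh.comp A B) = gH.comp (gBv.s A) (gBv.s B)
  b_hcomp : ∀ A B, gBh.e A = gBh.s B →
    gBv.e (gBh.comp A B) = gH.comp (gBv.e A) (gBv.e B)
  l_vcomp : ∀ A B, gBv.e A = gBv.s B →
    gBh.s (gBv.comp A B) = gV.comp (gBh.s A) (gBh.s B)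
  r_vcomp : ∀ A B, gBv.e A = gBv.s B →
    gBh.e (gBv.comp A B) = gV.comp (gBh.e A) (gBh.e B)
  t_idh : ∀ g, gBv.s (gBh.id g) = gH.id (gV.s g)
  b_idh : ∀ g, gBv.e (gBh.id g) = gH.id (gV.e g)
  l_idv : ∀ x, gBh.s (gBv.id x) = gV.id (gH.s x)
  r_idv : ∀ x, gBh.e (gBv.id x) = gV.id (gH.e x)
  t_hinv : ∀ A, gBv.s (gBh.inv A) = gH.inv (gBv.s A)
  b_hinv : ∀ A, gBv.e (gBh.inv A) = gH.inv (gBv.e A)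
  l_vinv : ∀ A, gBh.s (gBv.inv A) = gV.inv (gBh.s A)
  r_vinv : ∀ A, gBh.e (gBv.inv A) = gV.inv (gBh.e A)
  hinv_vinv : ∀ A, gBh.inv (gBv.inv A) = gBv.inv (gBh.inv A)
  idh_vcomp : ∀ g h, gV.e g = gV.s h →
    gBv.comp (gBh.id g) (gBh.id h) = gBh.id (gV.comp g h)
  idv_hcomp : ∀ x y, gH.e x = gH.s y →
    gBh.comp (gBv.id x) (gBv.id y) = gBv.id (gH.comp x y)
  id_id : ∀ p, gBh.id (gV.id p) = gBv.id (gH.id p)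
  interchange : ∀ A B C D,
    gBh.e A = gBh.s B → gBh.e C = gBh.s D →
    gBv.e A = gBv.s C → gBv.e B = gBv.s D →
    gBv.comp (gBh.comp A B) (gBh.comp C D) =
      gBh.comp (gBv.comp A C) (gBv.comp B D)

namespace DoubleGroupoid

instance (T : DoubleGroupoid) : Fintype T.P := T.fP
instance (T : DoubleGroupoid) : Fintype T.H := T.fH
instance (T : DoubleGroupoid) : Fintype T.V := T.fV
instance (T : DoubleGroupoid) : Fintype T.B := T.fB
instance (T : DoubleGroupoid) : DecidableEq T.P := T.dP
instance (T : DoubleGroupoid) : DecidableEq T.H := T.dH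
instance (T : DoubleGroupoid) : DecidableEq T.V := T.dV
instance (T : DoubleGroupoid) : DecidableEq T.B := T.dB

variable (T : DoubleGroupoid)

/-- top side of a box -/
def top (A : T.B) : T.H := T.gBv.s A
/-- bottom side of a box -/
def bot (A : T.B) : T.H := T.gBv.e A
/-- left side of a box -/
def left (A : T.B) : T.V := T.gBh.s A
/-- right side of a box -/
def right (A : T.B) : T.V := T.gBh.e A

/-- horizontal composition -/
def hcomp (A B : T.B) : T.B := T.gBh.comp A B
/-- vertical composition ("A over B") -/
def vcomp (A B : T.B) : T.B := T.gBv.comp A B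
/-- horizontal inverse -/
def hinv (A : T.B) : T.B := T.gBh.inv A
/-- vertical inverse -/
def vinv (A : T.B) : T.B := T.gBv.inv A
/-- total inverse `A⁻¹ = (Aʰ)ᵛ` -/
def tinv (A : T.B) : T.B := T.gBv.inv (T.gBh.inv A)

/-- top-left vertex -/
def tl (A : T.B) : T.P := T.gH.s (T.top A)
/-- top-right vertex -/
def tr (A : T.B) : T.P := T.gH.e (T.top A)
/-- bottom-left vertex -/
def bl (A : T.B) : T.P := T.gH.s (T.bot A)
/-- bottom-right vertex -/
def br (A : T.B) : T.P := T.gH.e (T.bot A)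
/-- right-top vertex (equal to `tr` by the corner compatibilities) -/
def rt (A : T.B) : T.P := T.gV.s (T.right A)
/-- right-bottom vertex -/
def rb (A : T.B) : T.P := T.gV.e (T.right A)
/-- left-top vertex -/
def lt (A : T.B) : T.P := T.gV.s (T.left A)
/-- left-bottom vertex -/
def lb (A : T.B) : T.P := T.gV.e (T.left A)

/-- upper-left corner function: number of boxes with the same left and top sides -/
noncomputable def ulc (A : T.B) : ℕ :=
  Nat.card {U : T.B // T.left U = T.left A ∧ T.top U = T.top A}
/-- upper-right corner function: number of boxes with the same right and top sides -/
noncomputable def urc (A : T.B) : ℕ :=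
  Nat.card {U : T.B // T.right U = T.right A ∧ T.top U = T.top A}
/-- lower-left corner function: number of boxes with the same left and bottom sides -/
noncomputable def llc (A : T.B) : ℕ :=
  Nat.card {U : T.B // T.left U = T.left A ∧ T.bot U = T.bot A}
/-- lower-right corner function: number of boxes with the same right and bottom sides -/
noncomputable def lrc (A : T.B) : ℕ :=
  Nat.card {U : T.B // T.right U = T.right A ∧ T.bot U = T.bot A}

/-- the double identity box `Θ_P` at a point -/
def thetaBox (p : T.P) : T.B := T.gBv.id (T.gH.id p)

/-- the filling condition: every compatible pair (right side, top side) bounds a box -/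
def Filling : Prop :=
  ∀ (g : T.V) (x : T.H), T.gH.e x = T.gV.s g →
    ∃ A : T.B, T.top A = x ∧ T.right A = g

/-- membership in the core groupoid `D`: the left and bottom sides are identities -/
def isCoreD (D : T.B) : Prop :=
  T.left D = T.gV.id (T.gV.s (T.left D)) ∧ T.bot D = T.gH.id (T.gH.s (T.bot D))

/-- membership in the core groupoid `E`: the right and top sides are identities -/
def isCoreE (E : T.B) : Prop :=
  T.right E = T.gV.id (T.gV.s (T.right E)) ∧ T.top E = T.gH.id (T.gH.s (T.top E))

/-- `θ(p)`: the number of boxes whose left and bottom sides are identities at `p` -/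
noncomputable def thetaLB (p : T.P) : ℕ :=
  Nat.card {U : T.B // T.left U = T.gV.id p ∧ T.bot U = T.gH.id p}

end DoubleGroupoid

/-- the antipode `S(A) = (⌜(A)/⌞(A)) A⁻¹` of the weak Hopf algebra `kT`,
as a linear map on the span of the boxes. -/
noncomputable def DoubleGroupoid.amap (k : Type) [Field k] (T : DoubleGroupoid) :
    (T.B →₀ k) →ₗ[k] (T.B →₀ k) :=
  Finsupp.lsum k fun A => LinearMap.toSpanSingleton k (T.B →₀ k)
    (((T.ulc A : k) / (T.llc A : k)) • Finsupp.single (T.tinv A) (1 : k))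

/-!
In the double groupoid of commuting squares of two equivalence relations `∼_H` and `∼_V`, a box
with prescribed top and left sides is determined by its bottom-right corner, which can be any
point that is both `∼_H`- and `∼_V`-equivalent to it. Hence `⌜(A) = θ(br A)`, and flipping
vertically gives `⌞(A) = θ(tr A)`. Since `A⁻¹` swaps opposite corners and `(A⁻¹)⁻¹ = A`,
`S²(A) = θ(br A) θ(tl A) / (θ(tr A) θ(bl A)) · A`. The partitions are chosen so that the box
has `θ(tl) = θ(bl) = 1`, `θ(tr) = n + 1` and `θ(br) = m`.
-/

theorem Gpd.inv_inv {P A : Type} (G : Gpd P A) (a : A) : G.inv (G.inv a) = a := by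
  have hid : G.comp (G.inv (G.inv a)) (G.id (G.e a)) = G.inv (G.inv a) := by
    simpa only [G.e_inv, G.s_inv] using G.comp_id (G.inv (G.inv a))
  calc G.inv (G.inv a)
      = G.comp (G.inv (G.inv a)) (G.comp (G.inv a) a) := by rw [G.inv_comp, hid]
    _ = G.comp (G.comp (G.inv (G.inv a)) (G.inv a)) a :=
        (G.comp_assoc _ _ _ (G.e_inv _) (G.e_inv a)).symm
    _ = a := by rw [G.inv_comp, G.e_inv, G.id_comp]

namespace DoubleGroupoid

variable (T : DoubleGroupoid)

theorem tinv_tinv (A : T.B) : T.tinv (T.tinv A) = A := by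
  simp only [tinv, T.hinv_vinv, Gpd.inv_inv]

theorem llc_eq_ulc_vinv (A : T.B) : T.llc A = T.ulc (T.vinv A) :=
  Nat.card_congr <| Equiv.subtypeEquiv (Function.Involutive.toPerm _ T.gBv.inv_inv) fun U => by
    change _ ↔ T.left (T.vinv U) = _ ∧ T.top (T.vinv U) = _
    simp only [left, top, bot, vinv, T.l_vinv, T.gBv.s_inv,
      (Function.Involutive.injective T.gV.inv_inv).eq_iff]

theorem amap_single (k : Type) [Field k] (A : T.B) :
    T.amap k (Finsupp.single A 1) =
      ((T.ulc A : k) / (T.llc A : k)) • Finsupp.single (T.tinv A) 1 := by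
  simp [amap]

theorem amap_amap_single (k : Type) [Field k] (A : T.B) :
    T.amap k (T.amap k (Finsupp.single A 1)) =
      ((T.ulc A : k) / (T.llc A : k) * ((T.ulc (T.tinv A) : k) / (T.llc (T.tinv A) : k))) •
        Finsupp.single A 1 := by
  rw [amap_single, map_smul, amap_single, tinv_tinv, smul_smul]

end DoubleGroupoid

section CommSquares

variable {P α β : Type}

abbrev SameClass (f : P → α) := {p : P × P // f p.1 = f p.2}

/-- The corners of a square are stored as `((tl, tr), (bl, br))`. -/
def IsCommSquare (f : P → α) (g : P → β) (x : (P × P) × (P × P)) : Prop :=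
  f x.1.1 = f x.1.2 ∧ f x.2.1 = f x.2.2 ∧ g x.1.1 = g x.2.1 ∧ g x.1.2 = g x.2.2

abbrev CommSquare (f : P → α) (g : P → β) := {x : (P × P) × (P × P) // IsCommSquare f g x}

variable (f : P → α) (g : P → β)

noncomputable def theta (x : P) : ℕ := Nat.card {y : P // f y = f x ∧ g y = g x}

theorem CommSquare.card_eq_theta_br (A : CommSquare f g) :
    Nat.card {U : CommSquare f g // U.1.1 = A.1.1 ∧ U.1.2.1 = A.1.2.1} = theta f g A.1.2.2 := by
  obtain ⟨⟨⟨a1, a2⟩, a3, a4⟩, h12, h34, h13, h24⟩ := A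
  refine Nat.card_congr
    { toFun U := ⟨U.1.1.2.2, ?_⟩
      invFun y := ⟨⟨((a1, a2), (a3, y.1)), h12, h34.trans y.2.1.symm, h13, h24.trans y.2.2.symm⟩,
        rfl, rfl⟩
      left_inv U := ?_
      right_inv y := rfl }
  all_goals
    obtain ⟨⟨⟨⟨u1, u2⟩, u3, u4⟩, -, hu34, -, hu24⟩, hU⟩ := U
    obtain ⟨⟨rfl, rfl⟩, rfl⟩ : (u1 = a1 ∧ u2 = a2) ∧ u3 = a3 := by simpa using hU
  · exact ⟨hu34.symm.trans h34, hu24.symm.trans h24⟩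
  · rfl

variable [DecidableEq P]

def Gpd.ofClassMap : Gpd P (SameClass f) where
  s a := a.1.1
  e a := a.1.2
  id p := ⟨(p, p), rfl⟩
  comp a b := if h : a.1.2 = b.1.1 then ⟨(a.1.1, b.1.2), by rw [a.2, h, b.2]⟩ else a
  inv a := ⟨(a.1.2, a.1.1), a.2.symm⟩
  s_id _ := rfl
  e_id _ := rfl
  s_comp a b h := by simp [dif_pos h]
  e_comp a b h := by simp [dif_pos h]
  id_comp a := by simp
  comp_id a := by simp
  comp_assoc a b c hab hbc := by simp_all
  s_inv _ := rfl
  e_inv _ := rfl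
  inv_comp a := by simp
  comp_inv a := by simp

def CommSquare.hGpd : Gpd (SameClass g) (CommSquare f g) where
  s A := ⟨(A.1.1.1, A.1.2.1), A.2.2.2.1⟩
  e A := ⟨(A.1.1.2, A.1.2.2), A.2.2.2.2⟩
  id v := ⟨((v.1.1, v.1.1), (v.1.2, v.1.2)), rfl, rfl, v.2, v.2⟩
  comp A B := if h : A.1.1.2 = B.1.1.1 ∧ A.1.2.2 = B.1.2.1 then
      ⟨((A.1.1.1, B.1.1.2), (A.1.2.1, B.1.2.2)), by rw [A.2.1, h.1, B.2.1],
        by rw [A.2.2.1, h.2, B.2.2.1], A.2.2.2.1, B.2.2.2.2⟩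
    else A
  inv A := ⟨((A.1.1.2, A.1.1.1), (A.1.2.2, A.1.2.1)),
    A.2.1.symm, A.2.2.1.symm, A.2.2.2.2, A.2.2.2.1⟩
  s_id _ := rfl
  e_id _ := rfl
  s_comp A B h := by simp_all
  e_comp A B h := by simp_all
  id_comp A := by simp
  comp_id A := by simp
  comp_assoc A B C hab hbc := by simp_all
  s_inv _ := rfl
  e_inv _ := rfl
  inv_comp A := by simp
  comp_inv A := by simp

def CommSquare.vGpd : Gpd (SameClass f) (CommSquare f g) where
  s A := ⟨A.1.1, A.2.1⟩
  e A := ⟨A.1.2, A.2.2.1⟩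
  id x := ⟨(x.1, x.1), x.2, x.2, rfl, rfl⟩
  comp A B := if h : A.1.2 = B.1.1 then
      ⟨(A.1.1, B.1.2), A.2.1, B.2.2.1,
        by rw [A.2.2.2.1, congrArg Prod.fst h, B.2.2.2.1],
        by rw [A.2.2.2.2, congrArg Prod.snd h, B.2.2.2.2]⟩
    else A
  inv A := ⟨(A.1.2, A.1.1), A.2.2.1, A.2.1, A.2.2.2.1.symm, A.2.2.2.2.symm⟩
  s_id _ := rfl
  e_id _ := rfl
  s_comp A B h := by simp_all
  e_comp A B h := by simp_all
  id_comp A := by simp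
  comp_id A := by simp
  comp_assoc A B C hab hbc := by simp_all
  s_inv _ := rfl
  e_inv _ := rfl
  inv_comp A := by simp
  comp_inv A := by simp

variable [Fintype P] [DecidableEq α] [DecidableEq β]

instance : DecidablePred (IsCommSquare f g) := fun _ => by
  unfold IsCommSquare; infer_instance

abbrev commSquares : DoubleGroupoid where
  P := P
  H := SameClass f
  V := SameClass g
  B := CommSquare f g
  gH := Gpd.ofClassMap f
  gV := Gpd.ofClassMap g
  gBh := CommSquare.hGpd f g
  gBv := CommSquare.vGpd f g
  corner_tl _ := rfl
  corner_tr _ := rfl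
  corner_bl _ := rfl
  corner_br _ := rfl
  t_hcomp A B h := by simp_all [CommSquare.hGpd, CommSquare.vGpd, Gpd.ofClassMap]
  b_hcomp A B h := by simp_all [CommSquare.hGpd, CommSquare.vGpd, Gpd.ofClassMap]
  l_vcomp A B h := by simp_all [CommSquare.hGpd, CommSquare.vGpd, Gpd.ofClassMap]
  r_vcomp A B h := by simp_all [CommSquare.hGpd, CommSquare.vGpd, Gpd.ofClassMap]
  t_idh _ := rfl
  b_idh _ := rfl
  l_idv _ := rfl
  r_idv _ := rfl
  t_hinv _ := rfl
  b_hinv _ := rfl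
  l_vinv _ := rfl
  r_vinv _ := rfl
  hinv_vinv _ := rfl
  idh_vcomp u v h := by simp_all [CommSquare.hGpd, CommSquare.vGpd, Gpd.ofClassMap]
  idv_hcomp x y h := by simp_all [CommSquare.hGpd, CommSquare.vGpd, Gpd.ofClassMap]
  id_id _ := rfl
  interchange A B C D hAB hCD hAC hBD := by simp_all [CommSquare.hGpd, CommSquare.vGpd]

theorem commSquares_filling (hfill : ∀ p q : P, ∃ y, f y = f p ∧ g y = g q) :
    (commSquares f g).Filling := by
  intro v x hxv
  obtain ⟨y, hfy, hgy⟩ := hfill v.1.2 x.1.1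
  exact ⟨⟨((x.1.1, x.1.2), (y, v.1.2)), x.2, hfy, hgy.symm, (congrArg g hxv).trans v.2⟩,
    rfl, Subtype.ext (Prod.ext hxv rfl)⟩

theorem commSquares_ulc (A : CommSquare f g) : (commSquares f g).ulc A = theta f g A.1.2.2 := by
  refine (Nat.card_congr (Equiv.subtypeEquivRight fun U => ?_)).trans
    (CommSquare.card_eq_theta_br f g A)
  simp only [DoubleGroupoid.left, DoubleGroupoid.top, Subtype.ext_iff, Prod.ext_iff]
  tauto

theorem commSquares_llc (A : CommSquare f g) : (commSquares f g).llc A = theta f g A.1.1.2 := by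
  rw [DoubleGroupoid.llc_eq_ulc_vinv, commSquares_ulc]
  rfl

theorem commSquares_amap_amap_single (k : Type) [Field k] (A : CommSquare f g) :
    (commSquares f g).amap k ((commSquares f g).amap k (Finsupp.single A 1)) =
      ((theta f g A.1.2.2 : k) / theta f g A.1.1.2 *
        ((theta f g A.1.1.1 : k) / theta f g A.1.2.1)) • Finsupp.single A 1 := by
  rw [DoubleGroupoid.amap_amap_single, commSquares_ulc, commSquares_llc, commSquares_ulc,
    commSquares_llc]
  rfl

end CommSquares

namespace RatioExample

/-- Cell `(b, c)` collects the points of `H`-class `b` and `V`-class `c`: it holds `P` for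
`(true, true)`, `Q, T₁, …, Tₙ` for `(true, false)`, `R` for `(false, true)` and `S₁, …, Sₘ`
for `(false, false)`. -/
def cellSize (m n : ℕ) : Bool × Bool → ℕ
  | (true, true) => 1
  | (true, false) => n + 1
  | (false, true) => 1
  | (false, false) => m

abbrev Point (m n : ℕ) := Σ c : Bool × Bool, Fin (cellSize m n c)

def hClass (m n : ℕ) (y : Point m n) : Bool := y.1.1

def vClass (m n : ℕ) (y : Point m n) : Bool := y.1.2

variable {m n : ℕ}

theorem cellSize_pos (hm : 0 < m) (c : Bool × Bool) : 0 < cellSize m n c := by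
  rcases c with ⟨_ | _, _ | _⟩ <;> simp [cellSize, hm]

def point (hm : 0 < m) (c : Bool × Bool) : Point m n := ⟨c, 0, cellSize_pos hm c⟩

theorem theta_eq_cellSize (x : Point m n) :
    theta (hClass m n) (vClass m n) x = cellSize m n x.1 :=
  calc theta (hClass m n) (vClass m n) x = Nat.card {y : Point m n // y.1 = x.1} :=
        Nat.card_congr (Equiv.subtypeEquivRight fun _ => Prod.ext_iff.symm)
    _ = cellSize m n x.1 := (Nat.card_congr (Equiv.sigmaSubtype x.1)).trans (Nat.card_fin _)

theorem filling (hm : 0 < m) : (commSquares (hClass m n) (vClass m n)).Filling :=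
  commSquares_filling _ _ fun p q => ⟨point hm (p.1.1, q.1.2), rfl, rfl⟩

def box (hm : 0 < m) : CommSquare (hClass m n) (vClass m n) :=
  ⟨((point hm (true, true), point hm (true, false)),
    (point hm (false, true), point hm (false, false))), rfl, rfl, rfl, rfl⟩

end RatioExample

theorem stmt13_general (m n : ℕ) (hm : 0 < m) :
    ∃ (T : DoubleGroupoid) (A : T.B), T.Filling ∧
      T.amap ℚ (T.amap ℚ (Finsupp.single A 1)) =
        ((m : ℚ) / ((n : ℚ) + 1)) • Finsupp.single A 1 := by
  open RatioExample in
  exact ⟨commSquares (hClass m n) (vClass m n), box hm, filling hm, by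
    rw [commSquares_amap_amap_single]
    simp only [theta_eq_cellSize]
    simp [box, point, cellSize]⟩

/-- for every positive rational `r = m/(n+1)` there exist a finite
double groupoid `T` satisfying the filling condition and a box `A` with
`S²(A) = r ⋅ A` in the associated weak Hopf algebra `ℚT`. -/
theorem stmt13 (m n : ℕ) (hm : 0 < m) (hn : 0 < n) :
    ∃ (T : DoubleGroupoid) (A : T.B), T.Filling ∧
      T.amap ℚ (T.amap ℚ (Finsupp.single A 1)) =
        ((m : ℚ) / ((n : ℚ) + 1)) • Finsupp.single A 1 :=
  stmt13_general m n hm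
end

section
/- Let T be a finite double groupoid satisfying the filling condition, with corner function θ: P → ℕ_{>0}. Then for every compatible pair (g, x) ∈ V ×_{t,r} H, the sum over all boxes V with t(V) = x and r(V) = g of 1/θ(bl(V)) equals 1. -/
/-!
Fix a box `V` with top `x` and right side `g`, and let `C = V ∘ₕ Vʰ`. Then
`U ↦ (Vᵛ ∘ₕ U⁻¹) ∘ᵥ C` is a bijection from the boxes with top `x` and right side `g` onto the
boxes whose left and bottom sides are identities at `bl V`, with inverse
`D ↦ (V⁻¹ ∘ₕ (D ∘ᵥ Cᵛ))⁻¹`. So `θ (bl V)` is the number `n` of boxes in the sum, whichever `V`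
is chosen; the filling condition gives `n > 0`, and the sum is `n · (1 / n) = 1`.
-/

namespace Gpd

variable {P A : Type} (G : Gpd P A)

theorem inv_inv_s18 (a : A) : G.inv (G.inv a) = a := by
  have h := G.comp_assoc (G.inv (G.inv a)) (G.inv a) a
    (by rw [G.e_inv]) (by rw [G.e_inv])
  rw [G.inv_comp, G.inv_comp, G.e_inv, G.id_comp] at h
  have he : G.e a = G.e (G.inv (G.inv a)) := by rw [G.e_inv, G.s_inv]
  rw [he, G.comp_id] at h
  exact h.symm

theorem comp_inv_cancel_right (a b : A) (h : G.e a = G.s b) :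
    G.comp (G.comp a b) (G.inv b) = a := by
  rw [G.comp_assoc a b (G.inv b) h (by rw [G.s_inv]), G.comp_inv, ← h, G.comp_id]

theorem inv_comp_cancel_left (a b : A) (h : G.e a = G.s b) :
    G.comp (G.inv a) (G.comp a b) = b := by
  rw [← G.comp_assoc (G.inv a) a b (by rw [G.e_inv]) h, G.inv_comp, h, G.id_comp]

theorem inv_comp_cancel_right (a b : A) (h : G.e a = G.e b) :
    G.comp (G.comp a (G.inv b)) b = a := by
  rw [G.comp_assoc a (G.inv b) b (by rw [G.s_inv, h]) (by rw [G.e_inv]),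
    G.inv_comp, ← h, G.comp_id]

theorem comp_inv_cancel_left (a b : A) (h : G.s a = G.s b) :
    G.comp a (G.comp (G.inv a) b) = b := by
  rw [← G.comp_assoc a (G.inv a) b (by rw [G.s_inv]) (by rw [G.e_inv, h]),
    G.comp_inv, h, G.id_comp]

end Gpd

namespace DoubleGroupoid

variable (T : DoubleGroupoid)

theorem left_tinv (A : T.B) : T.gBh.s (T.tinv A) = T.gV.inv (T.gBh.e A) := by
  rw [tinv, T.l_vinv, T.gBh.s_inv]

theorem right_tinv (A : T.B) : T.gBh.e (T.tinv A) = T.gV.inv (T.gBh.s A) := by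
  rw [tinv, T.r_vinv, T.gBh.e_inv]

theorem top_tinv (A : T.B) : T.gBv.s (T.tinv A) = T.gH.inv (T.gBv.e A) := by
  rw [tinv, T.gBv.s_inv, T.b_hinv]

theorem bot_tinv (A : T.B) : T.gBv.e (T.tinv A) = T.gH.inv (T.gBv.s A) := by
  rw [tinv, T.gBv.e_inv, T.t_hinv]

theorem tinv_eq_hinv_vinv (A : T.B) : T.tinv A = T.gBh.inv (T.gBv.inv A) :=
  (T.hinv_vinv A).symm

def hcompHinv (V : T.B) : T.B := T.gBh.comp V (T.gBh.inv V)

theorem top_hcompHinv (V : T.B) :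
    T.gBv.s (T.hcompHinv V) = T.gH.id (T.gH.s (T.gBv.s V)) := by
  rw [hcompHinv, T.t_hcomp _ _ (T.gBh.s_inv V).symm, T.t_hinv, T.gH.comp_inv]

theorem bot_hcompHinv (V : T.B) :
    T.gBv.e (T.hcompHinv V) = T.gH.id (T.gH.s (T.gBv.e V)) := by
  rw [hcompHinv, T.b_hcomp _ _ (T.gBh.s_inv V).symm, T.b_hinv, T.gH.comp_inv]

theorem left_hcompHinv (V : T.B) : T.gBh.s (T.hcompHinv V) = T.gBh.s V := by
  rw [hcompHinv, T.gBh.s_comp _ _ (T.gBh.s_inv V).symm]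

def toCoreD (V U : T.B) : T.B :=
  T.gBv.comp (T.gBh.comp (T.gBv.inv V) (T.tinv U)) (T.hcompHinv V)

def ofCoreD (V D : T.B) : T.B :=
  T.tinv (T.gBh.comp (T.tinv V) (T.gBv.comp D (T.gBv.inv (T.hcompHinv V))))

variable (V : T.B)

theorem right_vinv_eq_left_tinv (U : T.B) (hright : T.gBh.e U = T.gBh.e V) :
    T.gBh.e (T.gBv.inv V) = T.gBh.s (T.tinv U) := by
  rw [T.r_vinv, T.left_tinv, hright]

theorem bot_vinv_hcomp_tinv (U : T.B) (htop : T.gBv.s U = T.gBv.s V)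
    (hright : T.gBh.e U = T.gBh.e V) :
    T.gBv.e (T.gBh.comp (T.gBv.inv V) (T.tinv U)) = T.gBv.s (T.hcompHinv V) := by
  rw [T.b_hcomp _ _ (T.right_vinv_eq_left_tinv V U hright), T.gBv.e_inv, T.bot_tinv, htop,
    T.gH.comp_inv, T.top_hcompHinv]

theorem left_toCoreD (U : T.B) (htop : T.gBv.s U = T.gBv.s V)
    (hright : T.gBh.e U = T.gBh.e V) :
    T.gBh.s (T.toCoreD V U) = T.gV.id (T.gH.s (T.gBv.e V)) := by
  rw [toCoreD, T.l_vcomp _ _ (T.bot_vinv_hcomp_tinv V U htop hright),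
    T.gBh.s_comp _ _ (T.right_vinv_eq_left_tinv V U hright), T.l_vinv, T.left_hcompHinv,
    T.gV.inv_comp, T.corner_bl]

theorem bot_toCoreD (U : T.B) (htop : T.gBv.s U = T.gBv.s V)
    (hright : T.gBh.e U = T.gBh.e V) :
    T.gBv.e (T.toCoreD V U) = T.gH.id (T.gH.s (T.gBv.e V)) := by
  rw [toCoreD, T.gBv.e_comp _ _ (T.bot_vinv_hcomp_tinv V U htop hright), T.bot_hcompHinv]

theorem bot_eq_top_vinv_hcompHinv (D : T.B)
    (hbot : T.gBv.e D = T.gH.id (T.gH.s (T.gBv.e V))) :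
    T.gBv.e D = T.gBv.s (T.gBv.inv (T.hcompHinv V)) := by
  rw [T.gBv.s_inv, T.bot_hcompHinv, hbot]

theorem left_vcomp_vinv_hcompHinv (D : T.B) (hleft : T.gBh.s D = T.gV.id (T.gH.s (T.gBv.e V)))
    (hbot : T.gBv.e D = T.gH.id (T.gH.s (T.gBv.e V))) :
    T.gBh.s (T.gBv.comp D (T.gBv.inv (T.hcompHinv V))) = T.gV.inv (T.gBh.s V) := by
  have hs : T.gV.s (T.gV.inv (T.gBh.s V)) = T.gH.s (T.gBv.e V) := by
    rw [T.gV.s_inv, ← T.corner_bl]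
  rw [T.l_vcomp _ _ (T.bot_eq_top_vinv_hcompHinv V D hbot), hleft, T.l_vinv,
    T.left_hcompHinv, ← hs, T.gV.id_comp]

theorem bot_vcomp_vinv_hcompHinv (D : T.B)
    (hbot : T.gBv.e D = T.gH.id (T.gH.s (T.gBv.e V))) :
    T.gBv.e (T.gBv.comp D (T.gBv.inv (T.hcompHinv V))) = T.gH.id (T.gH.s (T.gBv.s V)) := by
  rw [T.gBv.e_comp _ _ (T.bot_eq_top_vinv_hcompHinv V D hbot), T.gBv.e_inv, T.top_hcompHinv]

theorem right_tinv_eq_left_vcomp (D : T.B) (hleft : T.gBh.s D = T.gV.id (T.gH.s (T.gBv.e V)))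
    (hbot : T.gBv.e D = T.gH.id (T.gH.s (T.gBv.e V))) :
    T.gBh.e (T.tinv V) = T.gBh.s (T.gBv.comp D (T.gBv.inv (T.hcompHinv V))) := by
  rw [T.right_tinv, T.left_vcomp_vinv_hcompHinv V D hleft hbot]

theorem top_ofCoreD (D : T.B) (hleft : T.gBh.s D = T.gV.id (T.gH.s (T.gBv.e V)))
    (hbot : T.gBv.e D = T.gH.id (T.gH.s (T.gBv.e V))) :
    T.gBv.s (T.ofCoreD V D) = T.gBv.s V := by
  have he : T.gH.s (T.gBv.s V) = T.gH.e (T.gH.inv (T.gBv.s V)) := (T.gH.e_inv _).symm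
  rw [ofCoreD, T.top_tinv, T.b_hcomp _ _ (T.right_tinv_eq_left_vcomp V D hleft hbot),
    T.bot_tinv, T.bot_vcomp_vinv_hcompHinv V D hbot, he, T.gH.comp_id, T.gH.inv_inv_s18]

theorem right_ofCoreD (D : T.B) (hleft : T.gBh.s D = T.gV.id (T.gH.s (T.gBv.e V)))
    (hbot : T.gBv.e D = T.gH.id (T.gH.s (T.gBv.e V))) :
    T.gBh.e (T.ofCoreD V D) = T.gBh.e V := by
  rw [ofCoreD, T.right_tinv, T.gBh.s_comp _ _ (T.right_tinv_eq_left_vcomp V D hleft hbot),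
    T.left_tinv, T.gV.inv_inv_s18]

theorem ofCoreD_toCoreD (U : T.B) (htop : T.gBv.s U = T.gBv.s V)
    (hright : T.gBh.e U = T.gBh.e V) :
    T.ofCoreD V (T.toCoreD V U) = U := by
  rw [ofCoreD, toCoreD, T.gBv.comp_inv_cancel_right _ _ (T.bot_vinv_hcomp_tinv V U htop hright),
    T.tinv_eq_hinv_vinv V, T.gBh.inv_comp_cancel_left _ _ (T.right_vinv_eq_left_tinv V U hright),
    T.tinv_tinv]

theorem toCoreD_ofCoreD (D : T.B) (hleft : T.gBh.s D = T.gV.id (T.gH.s (T.gBv.e V)))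
    (hbot : T.gBv.e D = T.gH.id (T.gH.s (T.gBv.e V))) :
    T.toCoreD V (T.ofCoreD V D) = D := by
  rw [toCoreD, ofCoreD, T.tinv_tinv, T.tinv_eq_hinv_vinv V,
    T.gBh.comp_inv_cancel_left _ _ (by rw [T.l_vinv, T.left_vcomp_vinv_hcompHinv V D hleft hbot]),
    T.gBv.inv_comp_cancel_right _ _ (by rw [T.bot_hcompHinv, hbot])]

theorem urc_eq_thetaLB_bl : T.urc V = T.thetaLB (T.bl V) :=
  Nat.card_congr
    { toFun := fun U => ⟨T.toCoreD V U, T.left_toCoreD V U U.2.2 U.2.1,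
        T.bot_toCoreD V U U.2.2 U.2.1⟩
      invFun := fun D => ⟨T.ofCoreD V D, T.right_ofCoreD V D D.2.1 D.2.2,
        T.top_ofCoreD V D D.2.1 D.2.2⟩
      left_inv := fun U => Subtype.ext (T.ofCoreD_toCoreD V U U.2.2 U.2.1)
      right_inv := fun D => Subtype.ext (T.toCoreD_ofCoreD V D D.2.1 D.2.2) }

theorem urc_eq_card_filter :
    T.urc V = (Finset.univ.filter fun U => T.top U = T.top V ∧ T.right U = T.right V).card := by
  rw [urc, Nat.card_eq_fintype_card, Fintype.card_subtype]
  simp_rw [and_comm]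

end DoubleGroupoid

theorem stmt18_general (T : DoubleGroupoid) (hfill : T.Filling)
    (g : T.V) (x : T.H) (hgx : T.gH.e x = T.gV.s g) :
    ∑ V ∈ Finset.univ.filter (fun V : T.B => T.top V = x ∧ T.right V = g),
      (1 : ℚ) / (T.thetaLB (T.bl V) : ℚ) = 1 := by
  set s := Finset.univ.filter (fun V : T.B => T.top V = x ∧ T.right V = g)
  have hθ : ∀ V ∈ s, T.thetaLB (T.bl V) = s.card := by
    intro V hV
    obtain ⟨hVx, hVg⟩ := (Finset.mem_filter.mp hV).2
    rw [← T.urc_eq_thetaLB_bl, T.urc_eq_card_filter, hVx, hVg]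
  obtain ⟨A, hAx, hAg⟩ := hfill g x hgx
  have hs : s.Nonempty := ⟨A, Finset.mem_filter.mpr ⟨Finset.mem_univ A, hAx, hAg⟩⟩
  rw [Finset.sum_congr rfl fun V hV => by rw [hθ V hV], Finset.sum_const, nsmul_eq_mul,
    mul_one_div, div_self (by exact_mod_cast hs.card_pos.ne')]

/-- if `T` satisfies the filling condition, then for every compatible
pair `(g,x)` the sum of `1/θ(bl V)` over all boxes `V` with top `x` and right
side `g` equals `1`. -/
theorem stmt18 (T : DoubleGroupoid) (hfill : T.Filling)
    (hpos : ∀ p : T.P, 0 < T.thetaLB p)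
    (g : T.V) (x : T.H) (hgx : T.gH.e x = T.gV.s g) :
    ∑ V ∈ Finset.univ.filter (fun V : T.B => T.top V = x ∧ T.right V = g),
      (1 : ℚ) / (T.thetaLB (T.bl V) : ℚ) = 1 :=
  stmt18_general T hfill g x hgx
end
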